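/- Let G = (V,E) be a finite graph and let a, b be two distinct vertices that have the same set of neighbors (in particular a and b are non-adjacent). Then the multivariate independent set polynomial satisfies I(G; x) = I(G - b; y), where y_a = (1 + x_a)(1 + x_b) - 1 and y_v = x_v for all vertices v ∉ {a, b}. -/

import Mathlib

open Finset
open scoped Classical

/-- A finset of vertices is independent in `G` if no two of its members are adjacent. -/
def IndepSet {V : Type*} (G : SimpleGraph V) (A : Finset V) : Prop :=
  ∀ u ∈ A, ∀ v ∈ A, ¬ G.Adj u v

/-- The multivariate independent set polynomial `I(G; x)`, evaluated at real vertex weights. -/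
noncomputable def indPoly {V : Type*} [Fintype V] (G : SimpleGraph V) (x : V → ℝ) : ℝ :=
  ∑ A : Finset V, if IndepSet G A then ∏ v ∈ A, x v else 0

/-- The independent set polynomial of `G - b` (vertex `b` deleted): sum over independent
sets avoiding `b` (independence in `G - b` agrees with independence in `G` for such sets). -/
noncomputable def indPolyDel {V : Type*} [Fintype V] [DecidableEq V]
    (G : SimpleGraph V) (b : V) (y : V → ℝ) : ℝ :=
  ∑ A ∈ (Finset.univ.erase b).powerset, if IndepSet G A then ∏ v ∈ A, y v else 0

/-!
Split every vertex set `A ⊆ V` as `A' ∪ T` with `A' ∩ {a, b} = ∅` and `T ⊆ {a, b}`. Since `a` and `b`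
are non-adjacent twins, `A' ∪ {a}`, `A' ∪ {b}` and `A' ∪ {a, b}` are independent exactly when
`A' ∪ {a}` is, so these three sets together contribute
`(x_a + x_b + x_a x_b) ∏_{A'} x = y_a ∏_{A'} y`, the weight of `A' ∪ {a}` in `G - b`.
-/

lemma indepSet_insert_iff {V : Type*} [DecidableEq V] {G : SimpleGraph V} {A : Finset V} {u : V} :
    IndepSet G (insert u A) ↔ IndepSet G A ∧ ∀ v ∈ A, ¬ G.Adj u v := by
  constructor
  · intro h
    exact ⟨fun p hp q hq => h p (mem_insert_of_mem hp) q (mem_insert_of_mem hq),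
      fun v hv => h u (mem_insert_self u A) v (mem_insert_of_mem hv)⟩
  · rintro ⟨hA, hu⟩ p hp q hq hpq
    rcases mem_insert.1 hp with rfl | hpA <;> rcases mem_insert.1 hq with rfl | hqA
    · exact G.loopless.irrefl _ hpq
    · exact hu q hqA hpq
    · exact hu p hpA hpq.symm
    · exact hA p hpA q hqA hpq

section Twins

variable {V : Type*} [DecidableEq V] {G : SimpleGraph V} {a b : V}

lemma indepSet_insert_iff_of_neighborSet_eq (htwin : G.neighborSet a = G.neighborSet b)
    (A : Finset V) : IndepSet G (insert b A) ↔ IndepSet G (insert a A) := by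
  simp only [indepSet_insert_iff, ← SimpleGraph.mem_neighborSet, htwin]

lemma indepSet_insert_insert_iff_of_neighborSet_eq (hnadj : ¬ G.Adj a b)
    (htwin : G.neighborSet a = G.neighborSet b) (A : Finset V) :
    IndepSet G (insert b (insert a A)) ↔ IndepSet G (insert a A) := by
  rw [indepSet_insert_iff, and_iff_left_iff_imp]
  intro hA v hv hbv
  rcases mem_insert.1 hv with rfl | hv
  · exact hnadj hbv.symm
  · exact (indepSet_insert_iff.1 ((indepSet_insert_iff_of_neighborSet_eq htwin A).2 hA)).2 v hv hbv

end Twins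

noncomputable def indWeight {V : Type*} (G : SimpleGraph V) (x : V → ℝ) (A : Finset V) : ℝ :=
  if IndepSet G A then ∏ v ∈ A, x v else 0

lemma indPoly_eq_sum_indWeight {V : Type*} [Fintype V] (G : SimpleGraph V) (x : V → ℝ) :
    indPoly G x = ∑ A ∈ (univ : Finset V).powerset, indWeight G x A := by
  rw [powerset_univ]
  rfl

lemma indWeight_update_of_notMem {V : Type*} [DecidableEq V] (G : SimpleGraph V) (x : V → ℝ)
    {a : V} {A : Finset V} (ha : a ∉ A) (c : ℝ) :
    indWeight G (Function.update x a c) A = indWeight G x A := by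
  have hprod : ∏ v ∈ A, Function.update x a c v = ∏ v ∈ A, x v :=
    prod_congr rfl fun v hv => Function.update_of_ne (ne_of_mem_of_not_mem hv ha) c x
  simp only [indWeight, hprod]

lemma indWeight_add_indWeight_twins {V : Type*} [DecidableEq V] {G : SimpleGraph V} {a b : V}
    (hab : a ≠ b) (hnadj : ¬ G.Adj a b) (htwin : G.neighborSet a = G.neighborSet b)
    (x : V → ℝ) {A : Finset V} (ha : a ∉ A) (hb : b ∉ A) :
    indWeight G x (insert a A) + indWeight G x (insert b A) + indWeight G x (insert b (insert a A))
      = indWeight G (Function.update x a ((1 + x a) * (1 + x b) - 1)) (insert a A) := by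
  have hb' : b ∉ insert a A := by simp [hab.symm, hb]
  simp only [indWeight]
  rw [indepSet_insert_insert_iff_of_neighborSet_eq hnadj htwin,
    indepSet_insert_iff_of_neighborSet_eq htwin]
  simp only [prod_insert ha, prod_insert hb, prod_insert hb', Function.update_self,
    prod_congr rfl fun v hv => Function.update_of_ne (ne_of_mem_of_not_mem hv ha) _ x]
  split_ifs <;> ring

lemma sum_powerset_insert_insert {α β : Type*} [DecidableEq α] [AddCommMonoid β] {s : Finset α}
    {a b : α} (hab : a ≠ b) (ha : a ∉ s) (hb : b ∉ s) (f : Finset α → β) :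
    ∑ t ∈ (insert b (insert a s)).powerset, f t
      = ∑ t ∈ s.powerset, (f t + f (insert a t) + f (insert b t) + f (insert b (insert a t))) := by
  have hb' : b ∉ insert a s := by simp [hab.symm, hb]
  rw [sum_powerset_insert hb', sum_powerset_insert ha, sum_powerset_insert ha,
    ← sum_add_distrib, ← sum_add_distrib, ← sum_add_distrib]
  exact sum_congr rfl fun t _ => by abel

/-- Twin reduction: if `a ≠ b` are non-adjacent vertices with the same set of neighbors,
then `I(G; x) = I(G - b; y)` with `y_a = (1 + x_a)(1 + x_b) - 1` and `y_v = x_v` otherwise. -/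
theorem twin_reduction {V : Type*} [Fintype V] [DecidableEq V]
    (G : SimpleGraph V) (a b : V) (hab : a ≠ b) (hnadj : ¬ G.Adj a b)
    (htwin : G.neighborSet a = G.neighborSet b) (x : V → ℝ) :
    indPoly G x = indPolyDel G b (Function.update x a ((1 + x a) * (1 + x b) - 1)) := by
  set s := (univ.erase b).erase a
  have hs : univ.erase b = insert a s := (insert_erase (mem_erase.2 ⟨hab, mem_univ a⟩)).symm
  have huniv : (univ : Finset V) = insert b (insert a s) := by rw [← hs, insert_erase (mem_univ b)]
  have has : a ∉ s := notMem_erase a _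
  have hbs : b ∉ s := fun h => notMem_erase b _ (mem_of_mem_erase h)
  rw [indPoly_eq_sum_indWeight, huniv, sum_powerset_insert_insert hab has hbs, indPolyDel, hs,
    sum_powerset_insert has, ← sum_add_distrib]
  refine sum_congr rfl fun A hA => ?_
  have haA : a ∉ A := fun h => has (mem_powerset.1 hA h)
  have hbA : b ∉ A := fun h => hbs (mem_powerset.1 hA h)
  change _ = indWeight G _ A + indWeight G _ (insert a A)
  rw [indWeight_update_of_notMem G x haA, ← indWeight_add_indWeight_twins hab hnadj htwin x haA hbA]
  ring
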